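/- arXiv:1710.02576 — 2 statements merged into one kernel-verified Lean document; each statement's English description precedes it below -/
import Mathlib

section
/- Let F ∈ ℝ^{n×n}, G ∈ ℝ^{n×m}, P positive definite, R the diagonal matrix diag(1/γ_1, …, 1/γ_m) with γ i > 0, and a ∈ (0,1). Suppose the block matrix [[aP - FᵀPF, -FᵀPG], [-GᵀPF, (1-a)R - GᵀPG]] is positive semidefinite. Then every trajectory x : ℕ → ℝ^n with x 1 = 0, x (k+1) = F (x k) + G (u k), and (u k i)^2 ≤ γ i for all k and i, satisfies (x k)ᵀ P (x k) ≤ m for all k ≥ 1. -/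
/-!
With V k = xₖᵀ P xₖ, testing the positive semidefinite block matrix against (xₖ, uₖ) gives the
dissipation inequality V (k+1) ≤ a V k + (1 - a) uₖᵀ R uₖ, and the input bound gives uₖᵀ R uₖ ≤ m.
So V (k+1) is at most a convex combination of V k and m, and V 1 = 0; by induction V k ≤ m.
-/

open Matrix

section

variable {ι κ : Type*} [Fintype ι] [Fintype κ]

theorem dotProduct_diagonal_inv_mulVec_le_card [DecidableEq κ] {γ u : κ → ℝ}
    (hu : ∀ i, u i ^ 2 ≤ γ i) :
    u ⬝ᵥ diagonal (fun i => 1 / γ i) *ᵥ u ≤ Fintype.card κ := by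
  rw [← Finset.card_univ, ← nsmul_one, ← Finset.sum_const]
  simp only [dotProduct, mulVec_diagonal]
  refine Finset.sum_le_sum fun i _ => ?_
  rw [show u i * (1 / γ i * u i) = u i ^ 2 / γ i by ring]
  exact div_le_one_of_le₀ (hu i) ((sq_nonneg _).trans (hu i))

theorem sumElim_dotProduct_fromBlocks_mulVec {α : Type*} [CommRing α]
    (F : Matrix ι ι α) (G : Matrix ι κ α) (P : Matrix ι ι α) (R : Matrix κ κ α) (a b : α)
    (x : ι → α) (u : κ → α) :
    Sum.elim x u ⬝ᵥ fromBlocks (a • P - Fᵀ * P * F) (-(Fᵀ * P * G))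
        (-(Gᵀ * P * F)) (b • R - Gᵀ * P * G) *ᵥ Sum.elim x u
      = a * (x ⬝ᵥ P *ᵥ x) + b * (u ⬝ᵥ R *ᵥ u)
        - (F *ᵥ x + G *ᵥ u) ⬝ᵥ P *ᵥ (F *ᵥ x + G *ᵥ u) := by
  simp only [fromBlocks_mulVec, Sum.elim_comp_inl, Sum.elim_comp_inr, sumElim_dotProduct_sumElim,
    sub_mulVec, neg_mulVec, smul_mulVec, ← mulVec_mulVec, mulVec_add, dotProduct_add, add_dotProduct,
    dotProduct_sub, dotProduct_neg, dotProduct_smul, smul_eq_mul, dotProduct_mulVec, vecMul_transpose,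
    vecMul_vecMul, add_vecMul]
  ring

theorem dotProduct_mulVec_step_le_of_posSemidef_fromBlocks
    {F : Matrix ι ι ℝ} {G : Matrix ι κ ℝ} {P : Matrix ι ι ℝ} {R : Matrix κ κ ℝ} {a b : ℝ}
    (hQ : (fromBlocks (a • P - Fᵀ * P * F) (-(Fᵀ * P * G))
        (-(Gᵀ * P * F)) (b • R - Gᵀ * P * G)).PosSemidef) (x : ι → ℝ) (u : κ → ℝ) :
    (F *ᵥ x + G *ᵥ u) ⬝ᵥ P *ᵥ (F *ᵥ x + G *ᵥ u) ≤ a * (x ⬝ᵥ P *ᵥ x) + b * (u ⬝ᵥ R *ᵥ u) := by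
  have h := hQ.dotProduct_mulVec_nonneg (Sum.elim x u)
  rw [star_trivial, sumElim_dotProduct_fromBlocks_mulVec] at h
  linarith

end

theorem le_const_of_step_le_convex_comb {V : ℕ → ℝ} {a c : ℝ} (ha : 0 ≤ a) (hV₁ : V 1 ≤ c)
    (hstep : ∀ k, V (k + 1) ≤ a * V k + (1 - a) * c) : ∀ k, 1 ≤ k → V k ≤ c := by
  intro k hk
  induction k, hk using Nat.le_induction with
  | base => exact hV₁
  | succ k _ ih => nlinarith [hstep k]

theorem stmt_4_general (n m : ℕ) (F : Matrix (Fin n) (Fin n) ℝ) (G : Matrix (Fin n) (Fin m) ℝ)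
    (P : Matrix (Fin n) (Fin n) ℝ)
    (γ : Fin m → ℝ)
    (R : Matrix (Fin m) (Fin m) ℝ) (hR : R = Matrix.diagonal fun i => 1 / γ i)
    (a : ℝ) (ha : a ∈ Set.Ioo (0:ℝ) 1)
    (hQ : (Matrix.fromBlocks (a • P - Fᵀ * P * F) (-(Fᵀ * P * G))
        (-(Gᵀ * P * F)) ((1 - a) • R - Gᵀ * P * G)).PosSemidef)
    (x : ℕ → Fin n → ℝ) (u : ℕ → Fin m → ℝ)
    (hx1 : x 1 = 0)
    (hdyn : ∀ k : ℕ, x (k + 1) = F.mulVec (x k) + G.mulVec (u k))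
    (hu : ∀ k : ℕ, ∀ i : Fin m, (u k i) ^ 2 ≤ γ i) :
    ∀ k : ℕ, 1 ≤ k → (x k) ⬝ᵥ P.mulVec (x k) ≤ (m : ℝ) := by
  obtain ⟨ha₀, ha₁⟩ := ha
  have hinput (k : ℕ) : u k ⬝ᵥ R *ᵥ u k ≤ m := by
    simpa [hR] using dotProduct_diagonal_inv_mulVec_le_card (hu k)
  refine le_const_of_step_le_convex_comb ha₀.le (by simp [hx1]) fun k => ?_
  calc x (k + 1) ⬝ᵥ P *ᵥ x (k + 1)
      ≤ a * (x k ⬝ᵥ P *ᵥ x k) + (1 - a) * (u k ⬝ᵥ R *ᵥ u k) := by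
        rw [hdyn k]
        exact dotProduct_mulVec_step_le_of_posSemidef_fromBlocks hQ (x k) (u k)
    _ ≤ a * (x k ⬝ᵥ P *ᵥ x k) + (1 - a) * m := by gcongr; exact hinput k

theorem stmt_4 (n m : ℕ) (F : Matrix (Fin n) (Fin n) ℝ) (G : Matrix (Fin n) (Fin m) ℝ)
    (P : Matrix (Fin n) (Fin n) ℝ) (hP : P.PosDef)
    (γ : Fin m → ℝ) (hγ : ∀ i, 0 < γ i)
    (R : Matrix (Fin m) (Fin m) ℝ) (hR : R = Matrix.diagonal fun i => 1 / γ i)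
    (a : ℝ) (ha : a ∈ Set.Ioo (0:ℝ) 1)
    (hQ : (Matrix.fromBlocks (a • P - Fᵀ * P * F) (-(Fᵀ * P * G))
        (-(Gᵀ * P * F)) ((1 - a) • R - Gᵀ * P * G)).PosSemidef)
    (x : ℕ → Fin n → ℝ) (u : ℕ → Fin m → ℝ)
    (hx1 : x 1 = 0)
    (hdyn : ∀ k : ℕ, x (k + 1) = F.mulVec (x k) + G.mulVec (u k))
    (hu : ∀ k : ℕ, ∀ i : Fin m, (u k i) ^ 2 ≤ γ i) :
    ∀ k : ℕ, 1 ≤ k → (x k) ⬝ᵥ P.mulVec (x k) ≤ (m : ℝ) :=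
  stmt_4_general n m F G P γ R hR a ha hQ x u hx1 hdyn hu
end

section
/- Let P be a positive definite n×n real matrix and x : ℕ → ℝ^n, u : ℕ → ℝ^m with x 1 = 0, x (k+1) = F (x k) + G (u k), where all u k satisfy u kᵀ R u k ≤ m for a positive definite R. If a ∈ (0,1) and (Fx+Gu)ᵀP(Fx+Gu) ≤ a xᵀPx + (1-a) uᵀRu holds for all x ∈ ℝ^n, u ∈ ℝ^m, then x kᵀ P (x k) ≤ m for all k ≥ 1, i.e., x k lies in the ellipsoid E(P,m). -/
open Matrix

theorem stmt_15 (n m : ℕ) (F : Matrix (Fin n) (Fin n) ℝ) (G : Matrix (Fin n) (Fin m) ℝ)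
    (P : Matrix (Fin n) (Fin n) ℝ) (hP : P.PosDef)
    (R : Matrix (Fin m) (Fin m) ℝ) (hR : R.PosDef)
    (a : ℝ) (ha : a ∈ Set.Ioo (0:ℝ) 1)
    (x : ℕ → Fin n → ℝ) (u : ℕ → Fin m → ℝ)
    (hx1 : x 1 = 0)
    (hdyn : ∀ k : ℕ, x (k + 1) = F.mulVec (x k) + G.mulVec (u k))
    (hu : ∀ k : ℕ, u k ⬝ᵥ R.mulVec (u k) ≤ (m : ℝ))
    (hdiss : ∀ (y : Fin n → ℝ) (v : Fin m → ℝ),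
      (F.mulVec y + G.mulVec v) ⬝ᵥ P.mulVec (F.mulVec y + G.mulVec v) ≤
        a * (y ⬝ᵥ P.mulVec y) + (1 - a) * (v ⬝ᵥ R.mulVec v)) :
    ∀ k : ℕ, 1 ≤ k → (x k) ⬝ᵥ P.mulVec (x k) ≤ (m : ℝ) := by
  intro k hk
  induction k with
  | zero => omega
  | succ k ih =>
    rcases Nat.eq_or_lt_of_le hk with h | h
    · rw [← h, hx1]
      simp [Matrix.mulVec_zero]
    · have hk1 : 1 ≤ k := by omega
      have hV := ih hk1
      calc (x (k + 1)) ⬝ᵥ P.mulVec (x (k + 1))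
          ≤ a * (x k ⬝ᵥ P.mulVec (x k)) + (1 - a) * (u k ⬝ᵥ R.mulVec (u k)) := by
            rw [hdyn k]; exact hdiss (x k) (u k)
        _ ≤ a * m + (1 - a) * m := by
            gcongr <;> first
              | exact ha.1.le
              | linarith [ha.2]
              | exact hV
              | exact hu k
        _ = m := by ring
end
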